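/- For every CCS_LC term t there is a normal form N such that E_RBB ⊢ t ≈ N, where normal forms are generated by the grammar S ::= μ.N | x ⌊ N | (x | α.0) ⌊ N | (x | y) ⌊ N and N ::= 0 | S | N + N, with x, y ∈ V, μ ∈ A_τ and α ∈ A ∪ Ā. -/
import Mathlib


/-- Observable actions: names and co-names. -/
inductive Obs (Name : Type) : Type where
  | pos : Name → Obs Name
  | neg : Name → Obs Name
  deriving DecidableEq

/-- Complementation of observable actions: `ā̄ = a`. -/
def Obs.bar {Name : Type} : Obs Name → Obs Name
  | .pos a => .neg a
  | .neg a => .pos a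

/-- Actions: observable actions plus the silent action τ. -/
inductive Act (Name : Type) : Type where
  | obs : Obs Name → Act Name
  | tau : Act Name
  deriving DecidableEq

/-- Open CCS_LC terms: CCS terms extended with left merge and communication merge. -/
inductive TermLC (Name : Type) : Type where
  | nil : TermLC Name
  | var : ℕ → TermLC Name
  | pre : Act Name → TermLC Name → TermLC Name
  | plus : TermLC Name → TermLC Name → TermLC Name
  | par : TermLC Name → TermLC Name → TermLC Name
  | lmerge : TermLC Name → TermLC Name → TermLC Name
  | cmerge : TermLC Name → TermLC Name → TermLC Name
  deriving DecidableEq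

/-- CCS_LC processes (closed terms). -/
inductive ProcLC (Name : Type) : Type where
  | nil : ProcLC Name
  | pre : Act Name → ProcLC Name → ProcLC Name
  | plus : ProcLC Name → ProcLC Name → ProcLC Name
  | par : ProcLC Name → ProcLC Name → ProcLC Name
  | lmerge : ProcLC Name → ProcLC Name → ProcLC Name
  | cmerge : ProcLC Name → ProcLC Name → ProcLC Name
  deriving DecidableEq

/-- SOS transition relation for CCS_LC processes. -/
inductive TransLC {Name : Type} : ProcLC Name → Act Name → ProcLC Name → Prop where
  | pre : ∀ (μ : Act Name) (p : ProcLC Name), TransLC (.pre μ p) μ p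
  | plusL : ∀ {p p' q : ProcLC Name} {μ : Act Name}, TransLC p μ p' → TransLC (.plus p q) μ p'
  | plusR : ∀ {p q q' : ProcLC Name} {μ : Act Name}, TransLC q μ q' → TransLC (.plus p q) μ q'
  | parL : ∀ {p p' q : ProcLC Name} {μ : Act Name}, TransLC p μ p' → TransLC (.par p q) μ (.par p' q)
  | parR : ∀ {p q q' : ProcLC Name} {μ : Act Name}, TransLC q μ q' → TransLC (.par p q) μ (.par p q')
  | comm : ∀ {p p' q q' : ProcLC Name} {α : Obs Name},
      TransLC p (.obs α) p' → TransLC q (.obs α.bar) q' → TransLC (.par p q) .tau (.par p' q')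
  | lmerge : ∀ {p p' : ProcLC Name} {μ : Act Name} (q : ProcLC Name),
      TransLC p μ p' → TransLC (.lmerge p q) μ (.par p' q)
  | cmerge : ∀ {p p' q q' : ProcLC Name} {α : Obs Name},
      TransLC p (.obs α) p' → TransLC q (.obs α.bar) q' → TransLC (.cmerge p q) .tau (.par p' q')

/-- `→ε` on CCS_LC processes. -/
def EpsLC {Name : Type} : ProcLC Name → ProcLC Name → Prop :=
  Relation.ReflTransGen (fun p q => TransLC p Act.tau q)

/-- `R` is a branching bisimulation on CCS_LC processes. -/
def IsBBLC {Name : Type} (R : ProcLC Name → ProcLC Name → Prop) : Prop :=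
  Symmetric R ∧
  ∀ p q, R p q → ∀ μ p', TransLC p μ p' →
    (μ = Act.tau ∧ R p' q) ∨
    ∃ q'' q', EpsLC q q'' ∧ TransLC q'' μ q' ∧ R p q'' ∧ R p' q'

/-- Branching bisimilarity on CCS_LC processes. -/
def BBLC {Name : Type} (p q : ProcLC Name) : Prop :=
  ∃ R : ProcLC Name → ProcLC Name → Prop, IsBBLC R ∧ R p q

/-- Rooted branching bisimilarity on CCS_LC processes. -/
def RBBLC {Name : Type} (p q : ProcLC Name) : Prop :=
  (∀ (μ : Act Name) (p' : ProcLC Name), TransLC p μ p' → ∃ q', TransLC q μ q' ∧ BBLC p' q') ∧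
  (∀ (μ : Act Name) (q' : ProcLC Name), TransLC q μ q' → ∃ p', TransLC p μ p' ∧ BBLC p' q')

/-- Applying a substitution to a CCS_LC term. -/
def TermLC.subst {Name : Type} (σ : ℕ → TermLC Name) : TermLC Name → TermLC Name
  | .nil => .nil
  | .var x => σ x
  | .pre μ t => .pre μ (TermLC.subst σ t)
  | .plus t u => .plus (TermLC.subst σ t) (TermLC.subst σ u)
  | .par t u => .par (TermLC.subst σ t) (TermLC.subst σ u)
  | .lmerge t u => .lmerge (TermLC.subst σ t) (TermLC.subst σ u)
  | .cmerge t u => .cmerge (TermLC.subst σ t) (TermLC.subst σ u)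

/-- Applying a closed substitution to a CCS_LC term. -/
def TermLC.substP {Name : Type} (σ : ℕ → ProcLC Name) : TermLC Name → ProcLC Name
  | .nil => .nil
  | .var x => σ x
  | .pre μ t => .pre μ (TermLC.substP σ t)
  | .plus t u => .plus (TermLC.substP σ t) (TermLC.substP σ u)
  | .par t u => .par (TermLC.substP σ t) (TermLC.substP σ u)
  | .lmerge t u => .lmerge (TermLC.substP σ t) (TermLC.substP σ u)
  | .cmerge t u => .cmerge (TermLC.substP σ t) (TermLC.substP σ u)

/-- Equational-logic derivability from an axiom system `E` over CCS_LC terms. -/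
inductive DerivLC {Name : Type} (E : TermLC Name → TermLC Name → Prop) :
    TermLC Name → TermLC Name → Prop where
  | ax : ∀ {t u : TermLC Name} (σ : ℕ → TermLC Name), E t u →
      DerivLC E (TermLC.subst σ t) (TermLC.subst σ u)
  | refl : ∀ t : TermLC Name, DerivLC E t t
  | symm : ∀ {t u : TermLC Name}, DerivLC E t u → DerivLC E u t
  | trans : ∀ {t u v : TermLC Name}, DerivLC E t u → DerivLC E u v → DerivLC E t v
  | pre : ∀ {t u : TermLC Name} (μ : Act Name), DerivLC E t u → DerivLC E (.pre μ t) (.pre μ u)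
  | plus : ∀ {t u t' u' : TermLC Name}, DerivLC E t u → DerivLC E t' u' →
      DerivLC E (.plus t t') (.plus u u')
  | par : ∀ {t u t' u' : TermLC Name}, DerivLC E t u → DerivLC E t' u' →
      DerivLC E (.par t t') (.par u u')
  | lmerge : ∀ {t u t' u' : TermLC Name}, DerivLC E t u → DerivLC E t' u' →
      DerivLC E (.lmerge t t') (.lmerge u u')
  | cmerge : ∀ {t u t' u' : TermLC Name}, DerivLC E t u → DerivLC E t' u' →
      DerivLC E (.cmerge t t') (.cmerge u u')

/-- Variable `x` used in the axioms. -/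
def vx {Name : Type} : TermLC Name := .var 0
/-- Variable `y` used in the axioms. -/
def vy {Name : Type} : TermLC Name := .var 1
/-- Variable `z` used in the axioms. -/
def vz {Name : Type} : TermLC Name := .var 2

/-- The axiom system `E_RBB` over CCS_LC. -/
inductive ERBB (Name : Type) : TermLC Name → TermLC Name → Prop where
  | A0 : ERBB Name (.plus vx .nil) vx
  | A1 : ERBB Name (.plus vx vy) (.plus vy vx)
  | A2 : ERBB Name (.plus (.plus vx vy) vz) (.plus vx (.plus vy vz))
  | A3 : ERBB Name (.plus vx vx) vx
  | L0 : ERBB Name (.lmerge .nil vx) .nil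
  | L1 : ∀ μ : Act Name, ERBB Name (.lmerge (.pre μ vx) vy) (.pre μ (.par vx vy))
  | L2 : ERBB Name (.lmerge (.lmerge vx vy) vz) (.lmerge vx (.par vy vz))
  | L3 : ERBB Name (.lmerge vx .nil) vx
  | L4 : ERBB Name (.lmerge (.plus vx vy) vz) (.plus (.lmerge vx vz) (.lmerge vy vz))
  | C0 : ERBB Name (.cmerge .nil vx) .nil
  | C1 : ERBB Name (.cmerge vx vy) (.cmerge vy vx)
  | C2 : ERBB Name (.cmerge (.cmerge vx vy) vz) (.cmerge vx (.cmerge vy vz))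
  | C3 : ERBB Name (.cmerge (.plus vx vy) vz) (.plus (.cmerge vx vz) (.cmerge vy vz))
  | C4 : ∀ α β : Obs Name, α = β.bar →
      ERBB Name (.cmerge (.pre (.obs α) vx) (.pre (.obs β) vy)) (.pre .tau (.par vx vy))
  | C5 : ∀ α β : Obs Name, α ≠ β.bar →
      ERBB Name (.cmerge (.pre (.obs α) vx) (.pre (.obs β) vy)) .nil
  | C6 : ERBB Name (.cmerge (.lmerge vx vy) vz) (.lmerge (.cmerge vx vz) vy)
  | C7 : ERBB Name (.cmerge (.cmerge vx vy) vz) .nil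
  | P : ERBB Name (.par vx vy)
      (.plus (.plus (.lmerge vx vy) (.lmerge vy vx)) (.cmerge vx vy))
  | TB : ∀ μ : Act Name,
      ERBB Name (.pre μ (.plus (.pre .tau (.plus vx vy)) vy)) (.pre μ (.plus vx vy))
  | TL : ERBB Name (.lmerge vx (.pre .tau vy)) (.lmerge vx vy)

mutual
/-- Simple normal forms over CCS_LC. -/
inductive IsSimpleNF {Name : Type} : TermLC Name → Prop where
  | pre : ∀ (μ : Act Name) {N : TermLC Name}, IsNF N → IsSimpleNF (.pre μ N)
  | lvar : ∀ (x : ℕ) {N : TermLC Name}, IsNF N → IsSimpleNF (.lmerge (.var x) N)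
  | lcact : ∀ (x : ℕ) (α : Obs Name) {N : TermLC Name}, IsNF N →
      IsSimpleNF (.lmerge (.cmerge (.var x) (.pre (.obs α) .nil)) N)
  | lcvar : ∀ (x y : ℕ) {N : TermLC Name}, IsNF N →
      IsSimpleNF (.lmerge (.cmerge (.var x) (.var y)) N)

/-- Normal forms over CCS_LC. -/
inductive IsNF {Name : Type} : TermLC Name → Prop where
  | nil : IsNF .nil
  | simple : ∀ {S : TermLC Name}, IsSimpleNF S → IsNF S
  | plus : ∀ {N M : TermLC Name}, IsNF N → IsNF M → IsNF (.plus N M)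
end


section NFAux
variable {Name : Type}

/-- Substitution sending 0,1,2 to given terms. -/
def sig3 (a b c : TermLC Name) : ℕ → TermLC Name
  | 0 => a | 1 => b | 2 => c | _ => .nil

private lemma dax {t u : TermLC Name} (a b c : TermLC Name) (h : ERBB Name t u) :
    DerivLC (ERBB Name) (TermLC.subst (sig3 a b c) t) (TermLC.subst (sig3 a b c) u) :=
  DerivLC.ax _ h

local notation "D" => DerivLC (ERBB Name)

private lemma dA0 (a : TermLC Name) : D (.plus a .nil) a := by
  simpa [sig3, TermLC.subst, vx] using dax a .nil .nil ERBB.A0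
private lemma dA1 (a b : TermLC Name) : D (.plus a b) (.plus b a) := by
  simpa [sig3, TermLC.subst, vx, vy] using dax a b .nil ERBB.A1
private lemma dL0 (a : TermLC Name) : D (.lmerge .nil a) .nil := by
  simpa [sig3, TermLC.subst, vx] using dax a .nil .nil ERBB.L0
private lemma dL1 (μ : Act Name) (a b : TermLC Name) :
    D (.lmerge (.pre μ a) b) (.pre μ (.par a b)) := by
  simpa [sig3, TermLC.subst, vx, vy] using dax a b .nil (ERBB.L1 μ)
private lemma dL2 (a b c : TermLC Name) :
    D (.lmerge (.lmerge a b) c) (.lmerge a (.par b c)) := by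
  simpa [sig3, TermLC.subst, vx, vy, vz] using dax a b c ERBB.L2
private lemma dL3 (a : TermLC Name) : D (.lmerge a .nil) a := by
  simpa [sig3, TermLC.subst, vx] using dax a .nil .nil ERBB.L3
private lemma dL4 (a b c : TermLC Name) :
    D (.lmerge (.plus a b) c) (.plus (.lmerge a c) (.lmerge b c)) := by
  simpa [sig3, TermLC.subst, vx, vy, vz] using dax a b c ERBB.L4
private lemma dC0 (a : TermLC Name) : D (.cmerge .nil a) .nil := by
  simpa [sig3, TermLC.subst, vx] using dax a .nil .nil ERBB.C0
private lemma dC1 (a b : TermLC Name) : D (.cmerge a b) (.cmerge b a) := by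
  simpa [sig3, TermLC.subst, vx, vy] using dax a b .nil ERBB.C1
private lemma dC3 (a b c : TermLC Name) :
    D (.cmerge (.plus a b) c) (.plus (.cmerge a c) (.cmerge b c)) := by
  simpa [sig3, TermLC.subst, vx, vy, vz] using dax a b c ERBB.C3
private lemma dC4 (α β : Obs Name) (h : α = β.bar) (a b : TermLC Name) :
    D (.cmerge (.pre (.obs α) a) (.pre (.obs β) b)) (.pre .tau (.par a b)) := by
  simpa [sig3, TermLC.subst, vx, vy] using dax a b .nil (ERBB.C4 α β h)
private lemma dC5 (α β : Obs Name) (h : α ≠ β.bar) (a b : TermLC Name) :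
    D (.cmerge (.pre (.obs α) a) (.pre (.obs β) b)) .nil := by
  simpa [sig3, TermLC.subst, vx, vy] using dax a b .nil (ERBB.C5 α β h)
private lemma dC6 (a b c : TermLC Name) :
    D (.cmerge (.lmerge a b) c) (.lmerge (.cmerge a c) b) := by
  simpa [sig3, TermLC.subst, vx, vy, vz] using dax a b c ERBB.C6
private lemma dC7 (a b c : TermLC Name) :
    D (.cmerge (.cmerge a b) c) .nil := by
  simpa [sig3, TermLC.subst, vx, vy, vz] using dax a b c ERBB.C7
private lemma dP (a b : TermLC Name) :
    D (.par a b) (.plus (.plus (.lmerge a b) (.lmerge b a)) (.cmerge a b)) := by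
  simpa [sig3, TermLC.subst, vx, vy] using dax a b .nil ERBB.P

/-- `x ∥ 0 ≈ x`. -/
private lemma dParNilR (a : TermLC Name) : D (.par a .nil) a :=
  .trans (dP a .nil) <|
  .trans (DerivLC.plus (DerivLC.plus (dL3 a) (dL0 a))
      (.trans (dC1 a .nil) (dC0 a))) <|
  .trans (dA0 _) (dA0 a)

/-- `0 ∥ x ≈ x`. -/
private lemma dParNilL (a : TermLC Name) : D (.par .nil a) a :=
  .trans (dP .nil a) <|
  .trans (DerivLC.plus (DerivLC.plus (dL0 a) (dL3 a)) (dC0 a)) <|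
  .trans (dA0 _) (.trans (dA1 _ _) (dA0 a))

/-- `x | 0 ≈ 0`. -/
private lemma dCnilR (a : TermLC Name) : D (.cmerge a .nil) .nil :=
  .trans (dC1 a .nil) (dC0 a)

/-- `x | (y + z) ≈ x|y + x|z`. -/
private lemma dCplusR (a b c : TermLC Name) :
    D (.cmerge a (.plus b c)) (.plus (.cmerge a b) (.cmerge a c)) :=
  .trans (dC1 _ _) (.trans (dC3 b c a) (DerivLC.plus (dC1 b a) (dC1 c a)))

/-- `((p|q)⌊r) | m ≈ 0`. -/
private lemma dHeadC7 (p q r m : TermLC Name) :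
    D (.cmerge (.lmerge (.cmerge p q) r) m) .nil :=
  .trans (dC6 (.cmerge p q) r m)
    (.trans (DerivLC.lmerge (dC7 p q m) (.refl r)) (dL0 r))

/-- `τ.x | y ≈ 0`. -/
private lemma dTau0 [Nonempty Name] (a b : TermLC Name) :
    D (.cmerge (.pre .tau a) b) .nil := by
  obtain ⟨n⟩ := ‹Nonempty Name›
  have h1 : D (TermLC.pre .tau a) (.pre Act.tau (.par a .nil)) :=
    DerivLC.pre _ (DerivLC.symm (dParNilR a))
  have h2 : D (TermLC.pre Act.tau (.par a .nil))
      (.cmerge (.pre (.obs (Obs.pos n)) a) (.pre (.obs (Obs.neg n)) .nil)) :=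
    DerivLC.symm (dC4 (Obs.pos n) (Obs.neg n) rfl a .nil)
  exact .trans (DerivLC.cmerge (.trans h1 h2) (.refl b)) (dC7 _ _ b)

/-- `x | μ.y ≈ (x | μ.0) ⌊ y`. -/
private lemma dVarAct (a : TermLC Name) (μ : Act Name) (b : TermLC Name) :
    D (.cmerge a (.pre μ b)) (.lmerge (.cmerge a (.pre μ .nil)) b) := by
  have h1 : D (TermLC.pre μ b) (.lmerge (.pre μ .nil) b) :=
    .trans (DerivLC.pre μ (DerivLC.symm (dParNilL b))) (DerivLC.symm (dL1 μ .nil b))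
  exact .trans (DerivLC.cmerge (.refl a) h1) <|
    .trans (dC1 a _) <|
    .trans (dC6 (.pre μ .nil) b a)
      (DerivLC.lmerge (dC1 _ a) (.refl b))

/-- Size of a term. -/
def sz : TermLC Name → ℕ
  | .nil => 1
  | .var _ => 1
  | .pre _ t => sz t + 1
  | .plus t u => sz t + sz u + 1
  | .par t u => sz t + sz u + 1
  | .lmerge t u => sz t + sz u + 1
  | .cmerge t u => sz t + sz u + 1

private lemma nf_step [Nonempty Name] : ∀ n : ℕ,
    (∀ N M : TermLC Name, IsNF N → IsNF M → sz N + sz M ≤ n →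
      (∃ K, IsNF K ∧ D (.lmerge N M) K) ∧ (∃ K, IsNF K ∧ D (.cmerge N M) K))
    ∧ (∀ N M : TermLC Name, IsNF N → IsNF M → sz N + sz M ≤ n →
      ∃ K, IsNF K ∧ D (.par N M) K) := by
  intro n
  induction n using Nat.strong_induction_on with
  | _ n IH =>
  have H1 : ∀ N M : TermLC Name, IsNF N → IsNF M → sz N + sz M ≤ n →
      (∃ K, IsNF K ∧ D (.lmerge N M) K) ∧ (∃ K, IsNF K ∧ D (.cmerge N M) K) := by
    intro N M hN hM hsz
    constructor
    · -- left merge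
      cases hN with
      | nil => exact ⟨.nil, IsNF.nil, dL0 M⟩
      | plus hN1 hN2 =>
        rename_i N1 N2
        obtain ⟨K1, hK1, d1⟩ := ((IH (sz N1 + sz M) (by simp [sz] at hsz ⊢; omega)).1
          N1 M hN1 hM le_rfl).1
        obtain ⟨K2, hK2, d2⟩ := ((IH (sz N2 + sz M) (by simp [sz] at hsz ⊢; omega)).1
          N2 M hN2 hM le_rfl).1
        exact ⟨.plus K1 K2, IsNF.plus hK1 hK2,
          .trans (dL4 N1 N2 M) (DerivLC.plus d1 d2)⟩
      | simple hS =>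
        cases hS with
        | pre μ hN' =>
          rename_i N'
          obtain ⟨K, hK, d⟩ := (IH (sz N' + sz M) (by simp [sz] at hsz ⊢; omega)).2
            N' M hN' hM le_rfl
          exact ⟨.pre μ K, IsNF.simple (IsSimpleNF.pre μ hK),
            .trans (dL1 μ N' M) (DerivLC.pre μ d)⟩
        | lvar x hN' =>
          rename_i N'
          obtain ⟨K, hK, d⟩ := (IH (sz N' + sz M) (by simp [sz] at hsz ⊢; omega)).2
            N' M hN' hM le_rfl
          exact ⟨.lmerge (.var x) K, IsNF.simple (IsSimpleNF.lvar x hK),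
            .trans (dL2 (.var x) N' M) (DerivLC.lmerge (.refl _) d)⟩
        | lcact x α hN' =>
          rename_i N'
          obtain ⟨K, hK, d⟩ := (IH (sz N' + sz M) (by simp [sz] at hsz ⊢; omega)).2
            N' M hN' hM le_rfl
          exact ⟨.lmerge (.cmerge (.var x) (.pre (.obs α) .nil)) K,
            IsNF.simple (IsSimpleNF.lcact x α hK),
            .trans (dL2 _ N' M) (DerivLC.lmerge (.refl _) d)⟩
        | lcvar x y hN' =>
          rename_i N'
          obtain ⟨K, hK, d⟩ := (IH (sz N' + sz M) (by simp [sz] at hsz ⊢; omega)).2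
            N' M hN' hM le_rfl
          exact ⟨.lmerge (.cmerge (.var x) (.var y)) K,
            IsNF.simple (IsSimpleNF.lcvar x y hK),
            .trans (dL2 _ N' M) (DerivLC.lmerge (.refl _) d)⟩
    · -- communication merge
      cases hM with
      | nil => exact ⟨.nil, IsNF.nil, dCnilR N⟩
      | plus hM1 hM2 =>
        rename_i M1 M2
        obtain ⟨K1, hK1, d1⟩ := ((IH (sz N + sz M1) (by simp [sz] at hsz ⊢; omega)).1
          N M1 hN hM1 le_rfl).2
        obtain ⟨K2, hK2, d2⟩ := ((IH (sz N + sz M2) (by simp [sz] at hsz ⊢; omega)).1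
          N M2 hN hM2 le_rfl).2
        exact ⟨.plus K1 K2, IsNF.plus hK1 hK2,
          .trans (dCplusR N M1 M2) (DerivLC.plus d1 d2)⟩
      | simple hSM =>
        cases hN with
        | nil => exact ⟨.nil, IsNF.nil, dC0 M⟩
        | plus hN1 hN2 =>
          rename_i N1 N2
          obtain ⟨K1, hK1, d1⟩ := ((IH (sz N1 + sz M) (by simp [sz] at hsz ⊢; omega)).1
            N1 M hN1 (IsNF.simple hSM) le_rfl).2
          obtain ⟨K2, hK2, d2⟩ := ((IH (sz N2 + sz M) (by simp [sz] at hsz ⊢; omega)).1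
            N2 M hN2 (IsNF.simple hSM) le_rfl).2
          exact ⟨.plus K1 K2, IsNF.plus hK1 hK2,
            .trans (dC3 N1 N2 M) (DerivLC.plus d1 d2)⟩
        | simple hSN =>
          cases hSN with
          | pre μ hN' =>
            rename_i N'
            cases μ with
            | tau => exact ⟨.nil, IsNF.nil, dTau0 N' M⟩
            | obs α =>
              cases hSM with
              | pre μ' hM' =>
                rename_i M'
                cases μ' with
                | tau =>
                  exact ⟨.nil, IsNF.nil, .trans (dC1 _ _) (dTau0 M' _)⟩
                | obs β =>
                  by_cases hb : α = β.bar
                  · obtain ⟨K, hK, d⟩ := (IH (sz N' + sz M')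
                      (by simp [sz] at hsz ⊢; omega)).2 N' M' hN' hM' le_rfl
                    exact ⟨.pre .tau K, IsNF.simple (IsSimpleNF.pre .tau hK),
                      .trans (dC4 α β hb N' M') (DerivLC.pre .tau d)⟩
                  · exact ⟨.nil, IsNF.nil, dC5 α β hb N' M'⟩
              | lvar y hM'' =>
                rename_i M''
                obtain ⟨K, hK, d⟩ := (IH (sz N' + sz M'')
                  (by simp [sz] at hsz ⊢; omega)).2 N' M'' hN' hM'' le_rfl
                refine ⟨.lmerge (.cmerge (.var y) (.pre (.obs α) .nil)) K,
                  IsNF.simple (IsSimpleNF.lcact y α hK), ?_⟩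
                exact .trans (dC1 _ _) <|
                  .trans (dC6 (.var y) M'' _) <|
                  .trans (DerivLC.lmerge (dVarAct (.var y) (.obs α) N') (.refl M'')) <|
                  .trans (dL2 _ N' M'') (DerivLC.lmerge (.refl _) d)
              | lcact y β hM'' =>
                rename_i M''
                exact ⟨.nil, IsNF.nil, .trans (dC1 _ _) (dHeadC7 _ _ _ _)⟩
              | lcvar y z hM'' =>
                rename_i M''
                exact ⟨.nil, IsNF.nil, .trans (dC1 _ _) (dHeadC7 _ _ _ _)⟩
          | lvar x hN' =>
            rename_i N'
            -- cmerge (x ⌊ N') M ≈ (x | M) ⌊ N'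
            have base : D (.cmerge (.lmerge (.var x) N') M)
                (.lmerge (.cmerge (.var x) M) N') := dC6 (.var x) N' M
            cases hSM with
            | pre μ' hM' =>
              rename_i M'
              cases μ' with
              | tau =>
                refine ⟨.nil, IsNF.nil, .trans base ?_⟩
                exact .trans (DerivLC.lmerge
                  (.trans (dC1 _ _) (dTau0 M' (.var x))) (.refl N')) (dL0 N')
              | obs β =>
                obtain ⟨K, hK, d⟩ := (IH (sz M' + sz N')
                  (by simp [sz] at hsz ⊢; omega)).2 M' N' hM' hN' le_rfl
                refine ⟨.lmerge (.cmerge (.var x) (.pre (.obs β) .nil)) K,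
                  IsNF.simple (IsSimpleNF.lcact x β hK), .trans base ?_⟩
                exact .trans (DerivLC.lmerge (dVarAct (.var x) (.obs β) M') (.refl N')) <|
                  .trans (dL2 _ M' N') (DerivLC.lmerge (.refl _) d)
            | lvar y hM'' =>
              rename_i M''
              obtain ⟨K, hK, d⟩ := (IH (sz M'' + sz N')
                (by simp [sz] at hsz ⊢; omega)).2 M'' N' hM'' hN' le_rfl
              refine ⟨.lmerge (.cmerge (.var x) (.var y)) K,
                IsNF.simple (IsSimpleNF.lcvar x y hK), .trans base ?_⟩
              have inner : D (.cmerge (.var x) (.lmerge (.var y) M''))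
                  (.lmerge (.cmerge (TermLC.var x) (.var y)) M'') :=
                .trans (dC1 _ _) (.trans (dC6 (.var y) M'' (.var x))
                  (DerivLC.lmerge (dC1 _ _) (.refl M'')))
              exact .trans (DerivLC.lmerge inner (.refl N')) <|
                .trans (dL2 _ M'' N') (DerivLC.lmerge (.refl _) d)
            | lcact y β hM'' =>
              rename_i M''
              refine ⟨.nil, IsNF.nil, .trans base ?_⟩
              exact .trans (DerivLC.lmerge
                (.trans (dC1 _ _) (dHeadC7 _ _ _ _)) (.refl N')) (dL0 N')
            | lcvar y z hM'' =>
              rename_i M''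
              refine ⟨.nil, IsNF.nil, .trans base ?_⟩
              exact .trans (DerivLC.lmerge
                (.trans (dC1 _ _) (dHeadC7 _ _ _ _)) (.refl N')) (dL0 N')
          | lcact x α hN' =>
            rename_i N'
            exact ⟨.nil, IsNF.nil, dHeadC7 _ _ _ _⟩
          | lcvar x y hN' =>
            rename_i N'
            exact ⟨.nil, IsNF.nil, dHeadC7 _ _ _ _⟩
  refine ⟨H1, ?_⟩
  intro N M hN hM hsz
  obtain ⟨⟨K1, hK1, d1⟩, ⟨K3, hK3, d3⟩⟩ := H1 N M hN hM hsz
  obtain ⟨⟨K2, hK2, d2⟩, -⟩ := H1 M N hM hN (by omega)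
  exact ⟨.plus (.plus K1 K2) K3, IsNF.plus (IsNF.plus hK1 hK2) hK3,
    .trans (dP N M) (DerivLC.plus (DerivLC.plus d1 d2) d3)⟩

end NFAux

/-- every CCS_LC term is provably equal (from `E_RBB`) to a
normal form. -/
theorem exists_normal_form {Name : Type} [Nonempty Name] (t : TermLC Name) :
    ∃ N : TermLC Name, IsNF N ∧ DerivLC (ERBB Name) t N := by
  induction t with
  | nil => exact ⟨.nil, IsNF.nil, .refl _⟩
  | var x =>
    exact ⟨.lmerge (.var x) .nil, IsNF.simple (IsSimpleNF.lvar x IsNF.nil),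
      DerivLC.symm (dL3 (.var x))⟩
  | pre μ t ih =>
    obtain ⟨N, hN, d⟩ := ih
    exact ⟨.pre μ N, IsNF.simple (IsSimpleNF.pre μ hN), DerivLC.pre μ d⟩
  | plus t u iht ihu =>
    obtain ⟨N, hN, dt⟩ := iht
    obtain ⟨M, hM, du⟩ := ihu
    exact ⟨.plus N M, IsNF.plus hN hM, DerivLC.plus dt du⟩
  | par t u iht ihu =>
    obtain ⟨N, hN, dt⟩ := iht
    obtain ⟨M, hM, du⟩ := ihu
    obtain ⟨K, hK, d⟩ := (nf_step (sz N + sz M)).2 N M hN hM le_rfl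
    exact ⟨K, hK, .trans (DerivLC.par dt du) d⟩
  | lmerge t u iht ihu =>
    obtain ⟨N, hN, dt⟩ := iht
    obtain ⟨M, hM, du⟩ := ihu
    obtain ⟨K, hK, d⟩ := ((nf_step (sz N + sz M)).1 N M hN hM le_rfl).1
    exact ⟨K, hK, .trans (DerivLC.lmerge dt du) d⟩
  | cmerge t u iht ihu =>
    obtain ⟨N, hN, dt⟩ := iht
    obtain ⟨M, hM, du⟩ := ihu
    obtain ⟨K, hK, d⟩ := ((nf_step (sz N + sz M)).1 N M hN hM le_rfl).2
    exact ⟨K, hK, .trans (DerivLC.cmerge dt du) d⟩
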